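/- Let A be a CME generator. Then for every t ≥ 0 and every real vector v (not necessarily nonnegative), ‖exp(tA) v‖₁ ≤ ‖v‖₁, i.e., the semigroup exp(tA) is nonexpansive in the ℓ¹ norm. -/

import Mathlib

/-!
The matrix `exp (t • A)` is entrywise nonnegative: `t • A + c • 1` is nonnegative for large `c`,
and `exp (t • A + c • 1) = exp c • exp (t • A)`. Its column sums are `1`, because `1ᵀ A = 0` kills
every term but the first of `1ᵀ exp (t • A) = ∑ₖ 1ᵀ (t • A)ᵏ / k!`. A nonnegative matrix whose
columns sum to `1` is an `ℓ¹` contraction by the triangle inequality.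
-/

open Finset
open scoped Nat
open NormedSpace

namespace Matrix

theorem sum_abs_mulVec_le {l n : Type*} [Fintype l] [Fintype n] (E : Matrix l n ℝ)
    (hE : ∀ j, ∑ i, |E i j| ≤ 1) (v : n → ℝ) : ∑ i, |(E *ᵥ v) i| ≤ ∑ j, |v j| :=
  calc ∑ i, |(E *ᵥ v) i| ≤ ∑ i, ∑ j, |E i j| * |v j| :=
        sum_le_sum fun i _ => (abs_sum_le_sum_abs _ _).trans_eq (by simp only [abs_mul])
    _ = ∑ j, (∑ i, |E i j|) * |v j| := by rw [sum_comm]; simp only [sum_mul]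
    _ ≤ ∑ j, |v j| := sum_le_sum fun j _ => mul_le_of_le_one_left (abs_nonneg _) (hE j)

variable {m : Type*} [Fintype m] [DecidableEq m]

theorem hasSum_exp {𝕂 : Type*} [RCLike 𝕂] (M : Matrix m m 𝕂) :
    HasSum (fun k : ℕ => (k !⁻¹ : 𝕂) • M ^ k) (exp M) :=
  open scoped Norms.Operator in exp_series_hasSum_exp' M

theorem vecMul_exp_of_vecMul_eq_zero {𝕂 : Type*} [RCLike 𝕂] {M : Matrix m m 𝕂} {u : m → 𝕂}
    (h : u ᵥ* M = 0) : u ᵥ* exp M = u := by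
  have hpow : ∀ k ≠ 0, u ᵥ* M ^ k = 0 := by
    rintro (_ | k) hk
    · exact absurd rfl hk
    · rw [pow_succ', ← vecMul_vecMul, h, zero_vecMul]
  refine ((hasSum_exp M).map (vecMulBilin 𝕂 𝕂 u)
    (continuous_const.matrix_vecMul continuous_id)).unique ?_
  convert hasSum_single (f := vecMulBilin 𝕂 𝕂 u ∘ fun k : ℕ => (k !⁻¹ : 𝕂) • M ^ k) 0 ?_
  · simp
  · intro k hk
    simp [hpow k hk]

theorem exp_apply_nonneg_of_nonneg {M : Matrix m m ℝ} (h : ∀ i j, 0 ≤ M i j) (i j : m) :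
    0 ≤ exp M i j :=
  (Pi.hasSum.mp (Pi.hasSum.mp (hasSum_exp M) i) j).nonneg fun k =>
    mul_nonneg (by positivity) (pow_apply_nonneg h k i j)

theorem exp_apply_nonneg_of_offDiag_nonneg {M : Matrix m m ℝ}
    (h : ∀ i j, i ≠ j → 0 ≤ M i j) (i j : m) : 0 ≤ exp M i j := by
  set c := ∑ k, |M k k|
  have hshift : ∀ i j, 0 ≤ (M + diagonal fun _ => c : Matrix m m ℝ) i j := by
    intro i j
    rcases eq_or_ne i j with rfl | hij
    · simp only [add_apply, diagonal_apply_eq]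
      linarith [neg_abs_le (M i i), single_le_sum (fun k _ => abs_nonneg (M k k)) (mem_univ i)]
    · simpa [hij] using h i j hij
  have hcomm : Commute M (diagonal fun _ => c) := by
    simpa [smul_one_eq_diagonal] using (Commute.one_right M).smul_right c
  have hprod := exp_apply_nonneg_of_nonneg hshift i j
  rw [exp_add_of_commute _ _ hcomm, exp_diagonal, mul_diagonal] at hprod
  exact nonneg_of_mul_nonneg_left hprod (by simpa [← Real.exp_eq_exp_ℝ] using Real.exp_pos c)

end Matrix

open Matrix

theorem cme_exp_l1_nonexpansive
    {n : ℕ} (A : Matrix (Fin n) (Fin n) ℝ)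
    (hoff : ∀ i j, i ≠ j → 0 ≤ A i j)
    (hcol : ∀ j, ∑ i, A i j = 0)
    (t : ℝ) (ht : 0 ≤ t) (v : Fin n → ℝ) :
    ∑ i, |(NormedSpace.exp (t • A)).mulVec v i| ≤ ∑ i, |v i| := by
  have hnonneg : ∀ i j, 0 ≤ exp (t • A) i j :=
    exp_apply_nonneg_of_offDiag_nonneg fun i j hij => mul_nonneg ht (hoff i j hij)
  have hones : (1 : Fin n → ℝ) ᵥ* (t • A) = 0 := by
    ext j
    simp [vecMul, dotProduct, ← mul_sum, hcol]
  refine sum_abs_mulVec_le _ (fun j => le_of_eq ?_) v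
  simpa [vecMul, dotProduct, abs_of_nonneg (hnonneg _ j)] using
    congrFun (vecMul_exp_of_vecMul_eq_zero hones) j
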